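/- arXiv:2206.12670 — 3 statements merged into one kernel-verified Lean document; each statement's English description precedes it below -/
import Mathlib

section
/- Let H be a finite-dimensional vector space over a field of characteristic zero, m a non-negative integer, and N : H → H a linear map with N^{m+1} = 0. Then there is a unique increasing filtration 0 ⊆ W_0 ⊆ W_1 ⊆ ... ⊆ W_{2m} = H such that N(W_l) ⊆ W_{l-2} for all l, and for every l ≥ 0 the induced map N^l : W_{m+l}/W_{m+l-1} → W_{m-l}/W_{m-l-1} is an isomorphism. -/
/-- `W` is the monodromy weight filtration of the nilpotent endomorphism `N`
centered at weight `m`: an increasing filtration `0 ⊆ W₀ ⊆ ⋯ ⊆ W_{2m} = H` with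
`N (W l) ⊆ W (l-2)` such that for every `l ≥ 0` the map induced by `N^l` on graded
pieces `Gr_{m+l} → Gr_{m-l}` is an isomorphism (injectivity and surjectivity of the
induced map are stated elementarily in terms of representatives). -/
def IsMonodromyWeightFiltration {K H : Type*} [Field K] [AddCommGroup H] [Module K H]
    (m : ℕ) (N : H →ₗ[K] H) (W : ℤ → Submodule K H) : Prop :=
  Monotone W ∧
  (∀ l : ℤ, l < 0 → W l = ⊥) ∧
  (∀ l : ℤ, 2 * (m : ℤ) ≤ l → W l = ⊤) ∧
  (∀ l : ℤ, (W l).map N ≤ W (l - 2)) ∧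
  (∀ l : ℕ,
    (∀ x ∈ W ((m : ℤ) + l), (N ^ l) x ∈ W ((m : ℤ) - l)) ∧
    (∀ x ∈ W ((m : ℤ) + l), (N ^ l) x ∈ W ((m : ℤ) - l - 1) → x ∈ W ((m : ℤ) + l - 1)) ∧
    (∀ y ∈ W ((m : ℤ) - l), ∃ x ∈ W ((m : ℤ) + l), y - (N ^ l) x ∈ W ((m : ℤ) - l - 1)))

/-!
Deligne's induction on `m`. If `N ^ (m + 2) = 0`, a monodromy weight filtration `W` centered at
`m + 1` is forced to have `W 0 = im N^(m+1)` and `W (2m+1) = ker N^(m+1)` (the case `l = m + 1`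
of the graded isomorphisms). Hence `W` is determined by its image `W'` in the reduction
`ker N^(m+1) / im N^(m+1)`, re-indexed by `W' j = W (j + 1) / im N^(m+1)`, and `W'` is a monodromy
weight filtration centered at `m` for the induced endomorphism, whose `(m+1)`-st power vanishes.
Conversely the preimage of the filtration given by induction, completed by `0` and `H`, works
for `N`: the only new facts needed are that `N` kills the preimage of `W' 0 = im N'^m` and maps
`H` into the preimage of `W' (2m-1) = ker N'^m`.
-/

def InducesSubquotientIso {R M M₂ : Type*} [Ring R] [AddCommGroup M] [Module R M]
    [AddCommGroup M₂] [Module R M₂] (f : M →ₗ[R] M₂) (A A' : Submodule R M)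
    (B B' : Submodule R M₂) : Prop :=
  (∀ x ∈ A, f x ∈ B) ∧ (∀ x ∈ A, f x ∈ B' → x ∈ A') ∧
    (∀ y ∈ B, ∃ x ∈ A, y - f x ∈ B')

section InducesSubquotientIso

variable {R M : Type*} [Ring R] [AddCommGroup M] [Module R M]

theorem inducesSubquotientIso_top_ker_range_bot (f : Module.End R M) :
    InducesSubquotientIso f ⊤ (LinearMap.ker f) (LinearMap.range f) ⊥ :=
  ⟨fun x _ => ⟨x, rfl⟩, fun _ _ hx => (Submodule.mem_bot R).1 hx,
    fun _ ⟨x, hx⟩ => ⟨x, trivial, by simp [hx]⟩⟩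

variable {W : ℤ → Submodule R M} {N : Module.End R M}

theorem pow_apply_mem_of_map_le (hW : ∀ l, (W l).map N ≤ W (l - 2)) (k : ℕ) {l : ℤ} {x : M}
    (hx : x ∈ W l) : (N ^ k) x ∈ W (l - 2 * k) := by
  induction k generalizing l x with
  | zero => simpa using hx
  | succ k ih =>
    have := ih (hW l (Submodule.mem_map_of_mem hx))
    rwa [← Module.End.mul_apply, ← pow_succ, show l - 2 - 2 * (k : ℤ) = l - 2 * ↑(k + 1) by
      push_cast; ring] at this

theorem inducesSubquotientIso_pow_of_lt {m l : ℕ} (hbot : ∀ l : ℤ, l < 0 → W l = ⊥)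
    (htop : ∀ l : ℤ, 2 * (m : ℤ) ≤ l → W l = ⊤) (hl : m < l) (hN : N ^ l = 0) :
    InducesSubquotientIso (N ^ l) (W (m + l)) (W (m + l - 1)) (W (m - l)) (W (m - l - 1)) := by
  rw [hN, htop (m + l - 1) (by omega), hbot (m - l) (by omega)]
  refine ⟨fun _ _ => zero_mem _, fun _ _ _ => trivial, fun y hy => ⟨0, zero_mem _, ?_⟩⟩
  simp [(Submodule.mem_bot R).1 hy]

end InducesSubquotientIso

namespace Subquotient

variable {R M : Type*} [Ring R] [AddCommGroup M] [Module R M] (I K : Submodule R M)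

abbrev Quot : Type _ := K ⧸ I.comap K.subtype

variable {I K}

abbrev mk (u : K) : Quot I K := Submodule.Quotient.mk u

variable (I K) in
def lift (S : Submodule R (Quot I K)) : Submodule R M :=
  (S.comap (I.comap K.subtype).mkQ).map K.subtype

variable (I K) in
def desc (V : Submodule R M) : Submodule R (Quot I K) :=
  (V.comap K.subtype).map (I.comap K.subtype).mkQ

theorem coe_mem_lift {S : Submodule R (Quot I K)} {u : K} :
    (u : M) ∈ lift I K S ↔ mk u ∈ S := by
  simp [lift]

theorem forall_mem_lift {S : Submodule R (Quot I K)} {P : M → Prop} :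
    (∀ x ∈ lift I K S, P x) ↔ ∀ u : K, mk u ∈ S → P u := by
  simp [lift]

theorem exists_mem_lift {S : Submodule R (Quot I K)} {P : M → Prop} :
    (∃ x ∈ lift I K S, P x) ↔ ∃ u : K, mk u ∈ S ∧ P u := by
  simp [lift]

theorem forall_quot {P : Quot I K → Prop} : (∀ y, P y) ↔ ∀ u : K, P (mk u) :=
  (Submodule.mkQ_surjective _).forall

theorem exists_quot {P : Quot I K → Prop} : (∃ y, P y) ↔ ∃ u : K, P (mk u) :=
  (Submodule.mkQ_surjective _).exists

theorem lift_mono : Monotone (lift I K) := fun _ _ h =>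
  Submodule.map_mono (Submodule.comap_mono h)

theorem desc_mono : Monotone (desc I K) := fun _ _ h =>
  Submodule.map_mono (Submodule.comap_mono h)

theorem lift_bot (h : I ≤ K) : lift I K ⊥ = I := by
  rw [lift, Submodule.comap_bot, Submodule.ker_mkQ, Submodule.map_comap_subtype, inf_eq_right.2 h]

theorem lift_top : lift I K ⊤ = K := by
  simp [lift]

theorem lift_desc {V : Submodule R M} (hI : I ≤ V) (hK : V ≤ K) :
    lift I K (desc I K V) = V := by
  rw [lift, desc, Submodule.comap_map_mkQ, sup_eq_right.2 (Submodule.comap_mono hI),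
    Submodule.map_comap_subtype, inf_eq_right.2 hK]

theorem desc_eq_bot {V : Submodule R M} (h : V ≤ I) : desc I K V = ⊥ := by
  rw [eq_bot_iff, desc, Submodule.map_le_iff_le_comap, Submodule.comap_bot, Submodule.ker_mkQ]
  exact Submodule.comap_mono h

theorem desc_eq_top {V : Submodule R M} (h : K ≤ V) : desc I K V = ⊤ := by
  rw [desc, Submodule.comap_subtype_eq_top.2 h, Submodule.map_top, Submodule.range_mkQ]

variable (I K) in
def map (f : M →ₗ[R] M) (hI : ∀ x ∈ I, f x ∈ I) (hK : ∀ x ∈ K, f x ∈ K) :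
    Module.End R (Quot I K) :=
  (I.comap K.subtype).mapQ _ (f.restrict hK) fun u hu => by exact hI u hu

section map
variable {f : M →ₗ[R] M} {hI : ∀ x ∈ I, f x ∈ I} {hK : ∀ x ∈ K, f x ∈ K}

@[simp]
theorem map_mk (u : K) : map I K f hI hK (mk u) = mk ⟨f u, hK u u.2⟩ := rfl

theorem map_pow (k : ℕ) : map I K f hI hK ^ k =
    map I K (f ^ k) (Module.End.pow_apply_mem_of_forall_mem k hI)
      (Module.End.pow_apply_mem_of_forall_mem k hK) := by
  refine LinearMap.ext fun y => Submodule.Quotient.induction_on _ y fun u => ?_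
  induction k generalizing u with
  | zero => rfl
  | succ k ih => rw [pow_succ, Module.End.mul_apply, map_mk, ih]; rfl

theorem map_eq_zero (h : ∀ x ∈ K, f x ∈ I) : map I K f hI hK = 0 := by
  ext u
  exact (Submodule.Quotient.mk_eq_zero _).2 (h u u.2)

theorem desc_le_comap {V T : Submodule R M} (h : V ≤ T.comap f) :
    desc I K V ≤ (desc I K T).comap (map I K f hI hK) := by
  rintro _ ⟨u, hu, rfl⟩
  exact ⟨_, h hu, rfl⟩

theorem apply_mem_lift {T : Submodule R (Quot I K)} {u : K} :
    f u ∈ lift I K T ↔ mk ⟨f u, hK u u.2⟩ ∈ T :=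
  coe_mem_lift (u := ⟨f u, hK u u.2⟩)

theorem sub_apply_mem_lift {T : Submodule R (Quot I K)} {u v : K} :
    (u : M) - f v ∈ lift I K T ↔ mk u - mk ⟨f v, hK v v.2⟩ ∈ T :=
  coe_mem_lift (u := u - ⟨f v, hK v v.2⟩)

theorem lift_le_comap_iff {S T : Submodule R (Quot I K)} :
    lift I K S ≤ (lift I K T).comap f ↔ S ≤ T.comap (map I K f hI hK) := by
  simp only [SetLike.le_def, Submodule.mem_comap, forall_mem_lift, forall_quot, map_mk,
    apply_mem_lift (hK := hK)]

theorem inducesSubquotientIso_lift_iff {S S' T T' : Submodule R (Quot I K)} :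
    InducesSubquotientIso f (lift I K S) (lift I K S') (lift I K T) (lift I K T') ↔
      InducesSubquotientIso (map I K f hI hK) S S' T T' := by
  simp only [InducesSubquotientIso, forall_mem_lift, exists_mem_lift, forall_quot, exists_quot,
    map_mk, apply_mem_lift (hK := hK), sub_apply_mem_lift (hK := hK), coe_mem_lift]

end map
end Subquotient

section Reduction

variable {R M : Type*} [Ring R] [AddCommGroup M] [Module R M] (N : Module.End R M)

theorem apply_mem_range_pow (k : ℕ) :
    ∀ x ∈ LinearMap.range (N ^ k), N x ∈ LinearMap.range (N ^ k) := by
  rintro _ ⟨y, rfl⟩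
  exact ⟨N y, by rw [← Module.End.mul_apply, ← Module.End.mul_apply, pow_mul_comm']⟩

theorem apply_mem_ker_pow (k : ℕ) :
    ∀ x ∈ LinearMap.ker (N ^ k), N x ∈ LinearMap.ker (N ^ k) := by
  intro x hx
  rw [LinearMap.mem_ker, ← Module.End.mul_apply, pow_mul_comm', Module.End.mul_apply,
    LinearMap.mem_ker.1 hx, map_zero]

theorem range_pow_le_ker_pow {j k : ℕ} (h : N ^ (j + k) = 0) :
    LinearMap.range (N ^ k) ≤ LinearMap.ker (N ^ j) := by
  rw [LinearMap.range_le_ker_iff, ← Module.End.mul_eq_comp, ← pow_add, h]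

abbrev Reduction (k : ℕ) : Type _ :=
  Subquotient.Quot (LinearMap.range (N ^ k)) (LinearMap.ker (N ^ k))

def reducedEnd (k : ℕ) : Module.End R (Reduction N k) :=
  Subquotient.map _ _ N (apply_mem_range_pow N k) (apply_mem_ker_pow N k)

theorem reducedEnd_pow_self (k : ℕ) : reducedEnd N k ^ k = 0 := by
  rw [reducedEnd, Subquotient.map_pow, Subquotient.map_eq_zero]
  intro x hx
  rw [LinearMap.mem_ker.1 hx]
  exact zero_mem _

variable {N} {m : ℕ}

theorem lift_range_pow_reducedEnd_le_ker (hN : N ^ (m + 2) = 0) :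
    Subquotient.lift _ _ (LinearMap.range (reducedEnd N (m + 1) ^ m)) ≤ LinearMap.ker N := by
  rw [SetLike.le_def, Subquotient.forall_mem_lift]
  rintro u ⟨y, hy⟩
  obtain ⟨v, rfl⟩ := Submodule.Quotient.mk_surjective _ y
  rw [reducedEnd, Subquotient.map_pow, Subquotient.map_mk] at hy
  obtain ⟨w, hw⟩ : (N ^ m) v - u ∈ LinearMap.range (N ^ (m + 1)) :=
    Submodule.mem_comap.1 ((Submodule.Quotient.eq _).1 hy)
  have hv : (N ^ (m + 1)) v = 0 := v.2
  have hu : (u : M) = (N ^ m) v - (N ^ (m + 1)) w := by rw [hw]; abel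
  rw [LinearMap.mem_ker, hu, map_sub, ← Module.End.mul_apply, ← pow_succ', hv,
    ← Module.End.mul_apply, ← pow_succ', hN, LinearMap.zero_apply, sub_zero]

theorem range_le_lift_ker_pow_reducedEnd (hN : N ^ (m + 2) = 0) :
    LinearMap.range N ≤ Subquotient.lift _ _ (LinearMap.ker (reducedEnd N (m + 1) ^ m)) := by
  rintro _ ⟨x, rfl⟩
  have hNx : N x ∈ LinearMap.ker (N ^ (m + 1)) := by
    rw [LinearMap.mem_ker, ← Module.End.mul_apply, ← pow_succ, hN, LinearMap.zero_apply]
  refine Subquotient.coe_mem_lift (u := ⟨N x, hNx⟩) |>.2 ?_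
  rw [LinearMap.mem_ker, reducedEnd, Subquotient.map_pow, Subquotient.map_mk]
  exact (Submodule.Quotient.mk_eq_zero _).2 ⟨x, by
    change (N ^ (m + 1)) x = (N ^ m) (N x)
    rw [pow_succ, Module.End.mul_apply]⟩

end Reduction

namespace IsMonodromyWeightFiltration

variable {K H : Type*} [Field K] [AddCommGroup H] [Module K H] {m : ℕ} {N : H →ₗ[K] H}
  {W : ℤ → Submodule K H}

theorem eq_ker_pow (hW : IsMonodromyWeightFiltration m N W) :
    W (2 * m - 1) = LinearMap.ker (N ^ m) := by
  obtain ⟨-, hbot, htop, hmap, hgr⟩ := hW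
  obtain ⟨-, hinj, -⟩ := hgr m
  apply le_antisymm
  · intro x hx
    have := pow_apply_mem_of_map_le hmap m hx
    rwa [hbot _ (by omega), Submodule.mem_bot] at this
  · intro x hx
    have := hinj x (by rw [htop _ (by omega)]; trivial)
      (by rw [LinearMap.mem_ker.1 hx]; exact zero_mem _)
    rwa [show (m : ℤ) + m - 1 = 2 * m - 1 by ring] at this

theorem eq_range_pow (hW : IsMonodromyWeightFiltration m N W) :
    W 0 = LinearMap.range (N ^ m) := by
  obtain ⟨-, hbot, htop, -, hgr⟩ := hW
  obtain ⟨hmaps, -, hsurj⟩ := hgr m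
  rw [← sub_self (m : ℤ)]
  apply le_antisymm
  · intro y hy
    obtain ⟨x, -, hx⟩ := hsurj y hy
    rw [hbot _ (by omega), Submodule.mem_bot, sub_eq_zero] at hx
    exact ⟨x, hx.symm⟩
  · rintro _ ⟨x, rfl⟩
    exact hmaps x (by rw [htop _ (by omega)]; trivial)

end IsMonodromyWeightFiltration

section DeligneStep

open Subquotient

variable {K H : Type*} [Field K] [AddCommGroup H] [Module K H] {N : Module.End K H} {m : ℕ}

variable (N m) in
def extendFiltration (W' : ℤ → Submodule K (Reduction N (m + 1))) : ℤ → Submodule K H :=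
  fun l => if l < 0 then ⊥ else if 2 * ((m : ℤ) + 1) ≤ l then ⊤ else lift _ _ (W' (l - 1))

variable (N m) in
def descendFiltration (V : ℤ → Submodule K H) : ℤ → Submodule K (Reduction N (m + 1)) :=
  fun j => desc _ _ (V (j + 1))

section extend

variable {W' : ℤ → Submodule K (Reduction N (m + 1))}

theorem extendFiltration_of_neg {l : ℤ} (hl : l < 0) : extendFiltration N m W' l = ⊥ :=
  if_pos hl

theorem extendFiltration_of_le {l : ℤ} (hl : 2 * ((m : ℤ) + 1) ≤ l) :
    extendFiltration N m W' l = ⊤ := by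
  rw [extendFiltration, if_neg (by omega), if_pos hl]

theorem extendFiltration_eq_lift {l : ℤ} (h0 : 0 ≤ l) (h1 : l ≤ 2 * m + 1) :
    extendFiltration N m W' l = lift _ _ (W' (l - 1)) := by
  rw [extendFiltration, if_neg (by omega), if_neg (by omega)]

theorem monotone_extendFiltration (hW' : Monotone W') : Monotone (extendFiltration N m W') := by
  intro a b hab
  simp only [extendFiltration]
  split_ifs <;> first
    | exact bot_le | exact le_top | omega | exact lift_mono (hW' (by omega))

theorem extendFiltration_map_le (hN : N ^ (m + 2) = 0)
    (hW' : IsMonodromyWeightFiltration m (reducedEnd N (m + 1)) W') (l : ℤ) :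
    (extendFiltration N m W' l).map N ≤ extendFiltration N m W' (l - 2) := by
  have hrange := hW'.eq_range_pow
  have hker := hW'.eq_ker_pow
  obtain ⟨hmono, -, -, hmap, -⟩ := hW'
  have hE := monotone_extendFiltration (N := N) hmono
  rw [Submodule.map_le_iff_le_comap]
  rcases lt_or_ge l 2 with hl | hl
  · calc extendFiltration N m W' l
        ≤ extendFiltration N m W' 1 := hE (by omega)
      _ = lift _ _ (LinearMap.range (reducedEnd N (m + 1) ^ m)) := by
        rw [extendFiltration_eq_lift (by omega) (by omega), sub_self, hrange]
      _ ≤ LinearMap.ker N := lift_range_pow_reducedEnd_le_ker hN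
      _ ≤ _ := LinearMap.ker_le_comap N
  rcases le_or_gt l (2 * m + 1) with hl' | hl'
  · have := Submodule.map_le_iff_le_comap.1 (hmap (l - 1))
    rw [show l - 1 - 2 = l - 2 - 1 by ring] at this
    rw [extendFiltration_eq_lift (by omega) hl', extendFiltration_eq_lift (by omega) (by omega)]
    exact lift_le_comap_iff.2 this
  · intro x _
    refine hE (show (2 * m : ℤ) ≤ l - 2 by omega) ?_
    rw [extendFiltration_eq_lift (by omega) (by omega), hker]
    exact range_le_lift_ker_pow_reducedEnd hN ⟨x, rfl⟩

theorem inducesSubquotientIso_extendFiltration_iff {l : ℕ} (hl : l ≤ m) :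
    InducesSubquotientIso (N ^ l) (extendFiltration N m W' ((m + 1 : ℕ) + l))
        (extendFiltration N m W' ((m + 1 : ℕ) + l - 1))
        (extendFiltration N m W' ((m + 1 : ℕ) - l))
        (extendFiltration N m W' ((m + 1 : ℕ) - l - 1)) ↔
      InducesSubquotientIso (reducedEnd N (m + 1) ^ l) (W' (m + l)) (W' (m + l - 1)) (W' (m - l))
        (W' (m - l - 1)) := by
  rw [extendFiltration_eq_lift (by omega) (by omega),
    extendFiltration_eq_lift (by omega) (by omega),
    extendFiltration_eq_lift (by omega) (by omega),
    extendFiltration_eq_lift (by omega) (by omega),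
    reducedEnd, Subquotient.map_pow, ← inducesSubquotientIso_lift_iff]
  push_cast
  ring_nf

theorem inducesSubquotientIso_extendFiltration_succ (hN : N ^ (m + 2) = 0)
    (hW' : IsMonodromyWeightFiltration m (reducedEnd N (m + 1)) W') :
    InducesSubquotientIso (N ^ (m + 1)) (extendFiltration N m W' ((m + 1 : ℕ) + (m + 1 : ℕ)))
      (extendFiltration N m W' ((m + 1 : ℕ) + (m + 1 : ℕ) - 1))
      (extendFiltration N m W' ((m + 1 : ℕ) - (m + 1 : ℕ)))
      (extendFiltration N m W' ((m + 1 : ℕ) - (m + 1 : ℕ) - 1)) := by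
  obtain ⟨-, hbot, htop, -, -⟩ := hW'
  have hI :
      extendFiltration N m W' ((m + 1 : ℕ) - (m + 1 : ℕ)) = LinearMap.range (N ^ (m + 1)) := by
    rw [sub_self, extendFiltration_eq_lift le_rfl (by omega), zero_sub, hbot _ (by omega),
      lift_bot (range_pow_le_ker_pow N (pow_eq_zero_of_le (by omega) hN))]
  have hK : extendFiltration N m W' ((m + 1 : ℕ) + (m + 1 : ℕ) - 1) =
      LinearMap.ker (N ^ (m + 1)) := by
    rw [extendFiltration_eq_lift (by omega) (by omega), htop _ (by omega), lift_top]
  rw [extendFiltration_of_le (by omega), hK, hI, extendFiltration_of_neg (by omega)]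
  exact inducesSubquotientIso_top_ker_range_bot _

theorem isMonodromyWeightFiltration_extendFiltration (hN : N ^ (m + 2) = 0)
    (hW' : IsMonodromyWeightFiltration m (reducedEnd N (m + 1)) W') :
    IsMonodromyWeightFiltration (m + 1) N (extendFiltration N m W') := by
  have hbot : ∀ l : ℤ, l < 0 → extendFiltration N m W' l = ⊥ :=
    fun _ => extendFiltration_of_neg
  have htop : ∀ l : ℤ, 2 * ((m + 1 : ℕ) : ℤ) ≤ l → extendFiltration N m W' l = ⊤ :=
    fun l hl => extendFiltration_of_le (by push_cast at hl; omega)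
  have hmap := extendFiltration_map_le hN hW'
  have hsucc := inducesSubquotientIso_extendFiltration_succ hN hW'
  obtain ⟨hmono, -, -, -, hgr⟩ := hW'
  refine ⟨monotone_extendFiltration hmono, hbot, htop, hmap, fun l => ?_⟩
  rcases lt_trichotomy l (m + 1) with hl | rfl | hl
  · exact (inducesSubquotientIso_extendFiltration_iff (by omega)).2 (hgr l)
  · exact hsucc
  · exact inducesSubquotientIso_pow_of_lt hbot htop hl (pow_eq_zero_of_le hl hN)

end extend

section descend

variable {V : ℤ → Submodule K H}

theorem eq_extendFiltration_descendFiltration (hV : IsMonodromyWeightFiltration (m + 1) N V) :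
    V = extendFiltration N m (descendFiltration N m V) := by
  have hker := hV.eq_ker_pow
  have hrange := hV.eq_range_pow
  obtain ⟨hmono, hbot, htop, -, -⟩ := hV
  funext l
  rcases lt_or_ge l 0 with h0 | h0
  · rw [hbot l h0, extendFiltration_of_neg h0]
  rcases lt_or_ge l (2 * ((m : ℤ) + 1)) with h1 | h1
  · rw [extendFiltration_eq_lift h0 (by omega), descendFiltration, sub_add_cancel, lift_desc]
    · exact hrange ▸ hmono h0
    · exact hker ▸ hmono (by push_cast; omega)
  · rw [htop l (by push_cast; omega), extendFiltration_of_le h1]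

theorem isMonodromyWeightFiltration_descendFiltration
    (hV : IsMonodromyWeightFiltration (m + 1) N V) :
    IsMonodromyWeightFiltration m (reducedEnd N (m + 1)) (descendFiltration N m V) := by
  have hext := eq_extendFiltration_descendFiltration hV
  have hker := hV.eq_ker_pow
  have hrange := hV.eq_range_pow
  obtain ⟨hmono, -, -, hmap, hgr⟩ := hV
  have hbot : ∀ j : ℤ, j < 0 → descendFiltration N m V j = ⊥ :=
    fun j hj => desc_eq_bot (hrange ▸ hmono (by omega))
  have htop : ∀ j : ℤ, 2 * (m : ℤ) ≤ j → descendFiltration N m V j = ⊤ :=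
    fun j hj => desc_eq_top (hker ▸ hmono (by push_cast; omega))
  refine ⟨fun a b hab => desc_mono (hmono (by omega)), hbot, htop, fun j => ?_, fun l => ?_⟩
  · have := Submodule.map_le_iff_le_comap.1 (hmap (j + 1))
    rw [show j + 1 - 2 = j - 2 + 1 by ring] at this
    exact Submodule.map_le_iff_le_comap.2 (desc_le_comap this)
  · rcases le_or_gt l m with hl | hl
    · have := hgr l
      rw [hext] at this
      exact (inducesSubquotientIso_extendFiltration_iff hl).1 this
    · exact inducesSubquotientIso_pow_of_lt hbot htop hl
        (pow_eq_zero_of_le hl (reducedEnd_pow_self N (m + 1)))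

end descend

end DeligneStep

theorem existsUnique_isMonodromyWeightFiltration_zero {K H : Type*} [Field K] [AddCommGroup H]
    [Module K H] {N : Module.End K H} (hN : N = 0) :
    ∃! W : ℤ → Submodule K H, IsMonodromyWeightFiltration 0 N W := by
  have hbot : ∀ l : ℤ, l < 0 → (if l < 0 then ⊥ else ⊤ : Submodule K H) = ⊥ :=
    fun l hl => if_pos hl
  have htop :
      ∀ l : ℤ, 2 * ((0 : ℕ) : ℤ) ≤ l → (if l < 0 then ⊥ else ⊤ : Submodule K H) = ⊤ :=
    fun l hl => if_neg (by omega)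
  refine ⟨fun l => if l < 0 then ⊥ else ⊤,
    ⟨?_, hbot, htop, fun l => by simp [hN], fun l => ?_⟩, ?_⟩
  · intro a b hab
    dsimp only
    split_ifs <;> first | exact bot_le | exact le_top | omega
  · rcases Nat.eq_zero_or_pos l with rfl | hl
    · simpa using fun y : H => ⟨y, sub_self y⟩
    · exact inducesSubquotientIso_pow_of_lt hbot htop hl (by rw [hN, zero_pow hl.ne'])
  · rintro V ⟨-, hVbot, hVtop, -, -⟩
    funext l
    split_ifs with hl
    exacts [hVbot l hl, hVtop l (by omega)]

theorem stmt_0_general {K H : Type*} [Field K] [AddCommGroup H] [Module K H]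
    (m : ℕ) (N : H →ₗ[K] H) (hN : N ^ (m + 1) = 0) :
    ∃! W : ℤ → Submodule K H, IsMonodromyWeightFiltration m N W := by
  induction m generalizing H with
  | zero => exact existsUnique_isMonodromyWeightFiltration_zero (by simpa using hN)
  | succ m ih =>
    obtain ⟨W', hW', hW'_unique⟩ := ih (reducedEnd N (m + 1)) (reducedEnd_pow_self N (m + 1))
    refine ⟨extendFiltration N m W', isMonodromyWeightFiltration_extendFiltration hN hW',
      fun V hV => ?_⟩
    rw [eq_extendFiltration_descendFiltration hV,
      hW'_unique _ (isMonodromyWeightFiltration_descendFiltration hV)]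

/-- Existence and uniqueness of the monodromy weight filtration of a nilpotent
endomorphism `N` with `N^{m+1} = 0` on a finite-dimensional vector space over a
field of characteristic zero. -/
theorem stmt_0 {K H : Type*} [Field K] [CharZero K] [AddCommGroup H] [Module K H]
    [FiniteDimensional K H] (m : ℕ) (N : H →ₗ[K] H) (hN : N ^ (m + 1) = 0) :
    ∃! W : ℤ → Submodule K H, IsMonodromyWeightFiltration m N W :=
  stmt_0_general m N hN
end

section
/- Let H be a finite-dimensional vector space over a field of characteristic zero, N a nilpotent endomorphism with N^{m+1}=0, and W the monodromy weight filtration of N centered at m. Let K = ker N and set Gr^W_k K = (W_k ∩ K)/(W_{k-1} ∩ K). If the induced map N : Gr^W_i H → Gr^W_{i-2} H has kernel as below and i ≤ m, then Gr^W_i K equals the kernel of the induced map N : Gr^W_i H → Gr^W_{i-2} H. -/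
namespace IsMonodromyWeightFiltration

variable {K H : Type*} [Field K] [AddCommGroup H] [Module K H]
  {m : ℕ} {N : Module.End K H} {W : ℤ → Submodule K H}

theorem mono (hW : IsMonodromyWeightFiltration m N W) : Monotone W := hW.1

theorem eq_bot (hW : IsMonodromyWeightFiltration m N W) {l : ℤ} (hl : l < 0) : W l = ⊥ :=
  hW.2.1 l hl

theorem apply_mem (hW : IsMonodromyWeightFiltration m N W) {l : ℤ} {x : H} (hx : x ∈ W l) :
    N x ∈ W (l - 2) :=
  hW.2.2.2.1 l (Submodule.mem_map_of_mem hx)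

theorem exists_mem_sub_pow_apply_mem (hW : IsMonodromyWeightFiltration m N W) (k : ℕ) {y : H}
    (hy : y ∈ W (m - k)) : ∃ x ∈ W (m + k), y - (N ^ k) x ∈ W (m - k - 1) :=
  (hW.2.2.2.2 k).2.2 y hy

theorem pow_apply_mem (hW : IsMonodromyWeightFiltration m N W) (j : ℕ) {l : ℤ} {x : H}
    (hx : x ∈ W l) : (N ^ j) x ∈ W (l - 2 * j) := by
  induction j with
  | zero => simpa using hx
  | succ j ih =>
    rw [pow_succ', Module.End.mul_apply, Nat.cast_succ, mul_add_one, ← sub_sub]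
    exact hW.apply_mem ih

theorem le_map_pow (hW : IsMonodromyWeightFiltration m N W) (j : ℕ) (c : ℤ)
    (hc : c ≤ m - j - 2) : W c ≤ (W (m + j - 2)).map (N ^ j) := by
  obtain hneg | hc0 := lt_or_ge c 0
  · simp [hW.eq_bot hneg]
  have ih := hW.le_map_pow j (c - 1) (by omega)
  obtain ⟨k, rfl⟩ : ∃ k : ℕ, c = m - k := ⟨(m - c).toNat, by omega⟩
  have hjk : j ≤ k := by omega
  intro w hw
  obtain ⟨z, hz, hwz⟩ := hW.exists_mem_sub_pow_apply_mem k hw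
  have hNz : (N ^ k) z = (N ^ j) ((N ^ (k - j)) z) := by
    rw [← Module.End.mul_apply, ← pow_add, Nat.add_sub_cancel' hjk]
  have hz' : (N ^ (k - j)) z ∈ W (m + j - 2) := by
    refine hW.mono ?_ (hW.pow_apply_mem (k - j) hz)
    push_cast [Nat.cast_sub hjk]
    omega
  have h := add_mem (ih hwz) (Submodule.mem_map_of_mem hz')
  rwa [← hNz, sub_add_cancel] at h
termination_by (c + 1).toNat

theorem exists_mem_ker_sub_mem (hW : IsMonodromyWeightFiltration m N W) (l : ℕ) {v : H}
    (hv : v ∈ W (m - l)) (hNv : N v ∈ W (m - l - 3)) :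
    ∃ u ∈ W (m - l), N u = 0 ∧ v - u ∈ W (m - l - 1) := by
  obtain ⟨x, hx, hvx⟩ := hW.exists_mem_sub_pow_apply_mem l hv
  have hNx : (N ^ (l + 1)) x ∈ W (m - (l + 1 : ℕ) - 2) := by
    rw [show (m : ℤ) - l - 3 = m - l - 1 - 2 by ring] at hNv
    have h := sub_mem hNv (hW.apply_mem hvx)
    rw [map_sub, sub_sub_cancel, ← Module.End.mul_apply, ← pow_succ'] at h
    convert h using 2
    push_cast
    ring
  obtain ⟨y, hy, hNy⟩ := hW.le_map_pow (l + 1) _ le_rfl hNx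
  refine ⟨(N ^ l) (x - y), ?_, ?_, ?_⟩
  · convert hW.pow_apply_mem l (sub_mem hx (hW.mono (by omega) hy)) using 2
    ring
  · rw [← Module.End.mul_apply, ← pow_succ', map_sub, hNy, sub_self]
  · rw [map_sub, sub_sub_eq_add_sub, add_sub_right_comm]
    refine add_mem hvx (hW.mono ?_ (hW.pow_apply_mem l hy))
    push_cast
    omega

end IsMonodromyWeightFiltration

/-- Stated on representatives: the class `[v] ∈ Gr^W_i H` of `v ∈ W_i` is killed by the
induced map iff `N v ∈ W_{i-3}`, and lies in `Gr^W_i K` iff it has a representative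
`u ∈ W_i ∩ ker N`. -/
theorem stmt_1_general {K H : Type*} [Field K] [AddCommGroup H] [Module K H]
    (m : ℕ) (N : H →ₗ[K] H)
    (W : ℤ → Submodule K H) (hW : IsMonodromyWeightFiltration m N W) :
    ∀ i : ℤ, i ≤ (m : ℤ) → ∀ v ∈ W i,
      (N v ∈ W (i - 3) ↔ ∃ u, u ∈ W i ∧ N u = 0 ∧ v - u ∈ W (i - 1)) := by
  intro i hi v hv
  refine ⟨fun hNv => ?_, fun ⟨u, _, hNu, hvu⟩ => ?_⟩
  · obtain ⟨l, rfl⟩ : ∃ l : ℕ, i = m - l := ⟨(m - i).toNat, by omega⟩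
    exact hW.exists_mem_ker_sub_mem l hv hNv
  · rw [← sub_add_cancel v u, map_add, hNu, add_zero]
    convert hW.apply_mem hvu using 2
    ring

/-- For `i ≤ m`, the subquotient `Gr^W_i K = (W_i ∩ ker N)/(W_{i-1} ∩ ker N)`
coincides with the kernel of the map `Gr^W_i H → Gr^W_{i-2} H` induced by `N`.
Stated on representatives: a class `[v] ∈ Gr^W_i H` (with `v ∈ W_i`) is killed by
the induced map (i.e. `N v ∈ W_{i-3}`) iff it is represented by an element of
`W_i ∩ ker N` (i.e. `∃ u ∈ W_i` with `N u = 0` and `v - u ∈ W_{i-1}`). -/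
theorem stmt_1 {K H : Type*} [Field K] [CharZero K] [AddCommGroup H] [Module K H]
    [FiniteDimensional K H] (m : ℕ) (N : H →ₗ[K] H) (hN : N ^ (m + 1) = 0)
    (W : ℤ → Submodule K H) (hW : IsMonodromyWeightFiltration m N W) :
    ∀ i : ℤ, i ≤ (m : ℤ) → ∀ v ∈ W i,
      (N v ∈ W (i - 3) ↔ ∃ u, u ∈ W i ∧ N u = 0 ∧ v - u ∈ W (i - 1)) :=
  stmt_1_general m N W hW
end

section
/- Let H be a finite-dimensional vector space with nilpotent N, N^{m+1}=0, and monodromy weight filtration W centered at m. Suppose N is an infinitesimal isometry of a nondegenerate bilinear form S on H, i.e. S(Nu,v) + S(u,Nv) = 0 for all u,v. Then the annihilator of W_l with respect to S equals W_{2m-l-1}, for all l. -/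
open Module

namespace Submodule

variable {K V V' : Type*} [Field K] [AddCommGroup V] [Module K V] [AddCommGroup V'] [Module K V']
  [FiniteDimensional K V]

theorem finrank_map_add_finrank_inf_ker (f : V →ₗ[K] V') (P : Submodule K V) :
    finrank K (P.map f) + finrank K (P ⊓ LinearMap.ker f : Submodule K V) = finrank K P := by
  have hker : (P ⊓ LinearMap.ker f).comap P.subtype = LinearMap.ker (f.domRestrict P) := by
    rw [LinearMap.ker_domRestrict, comap_inf, comap_subtype_self, top_inf_eq]
  rw [← (f.domRestrict P).finrank_range_add_finrank_ker, LinearMap.range_domRestrict, ← hker,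
    (comapSubtypeEquivOfLe inf_le_left).finrank_eq]

/-- The hypotheses say that `f` induces an isomorphism `A / A' ≃ B / C`. -/
theorem finrank_add_finrank_eq_of_map_sup_eq [FiniteDimensional K V'] {f : V →ₗ[K] V'}
    {A A' : Submodule K V} {B C : Submodule K V'} (hB : A.map f ⊔ C = B)
    (hA' : A ⊓ C.comap f = A') :
    finrank K A + finrank K C = finrank K B + finrank K A' := by
  have hA := finrank_map_add_finrank_inf_ker (C.mkQ ∘ₗ f) A
  have hC := finrank_map_add_finrank_inf_ker C.mkQ B
  have hmap : A.map (C.mkQ ∘ₗ f) = B.map C.mkQ := by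
    rw [map_comp, ← hB, map_sup, mkQ_map_self, sup_bot_eq]
  rw [LinearMap.ker_comp, ker_mkQ, hA', hmap] at hA
  rw [ker_mkQ, inf_eq_right.2 (hB ▸ le_sup_right)] at hC
  omega

end Submodule

namespace LinearMap.BilinForm

variable {K H : Type*} [Field K] [AddCommGroup H] [Module K H]

theorem apply_pow_eq_neg_one_pow_mul {N : H →ₗ[K] H} {S : LinearMap.BilinForm K H}
    (hNS : ∀ u v : H, S (N u) v + S u (N v) = 0) (j : ℕ) (u w : H) :
    S ((N ^ j) u) w = (-1) ^ j * S u ((N ^ j) w) := by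
  induction j generalizing u with
  | zero => simp
  | succ j ih =>
    nth_rewrite 1 [pow_succ]
    rw [Module.End.mul_apply, ih, eq_neg_of_add_eq_zero_left (hNS u _), ← Module.End.mul_apply,
      ← pow_succ']
    ring

end LinearMap.BilinForm

theorem pow_apply_mem_of_map_le_s3 {K H : Type*} [Field K] [AddCommGroup H] [Module K H]
    {N : H →ₗ[K] H} {W : ℤ → Submodule K H} (hN : ∀ l, (W l).map N ≤ W (l - 2)) (j : ℕ)
    {b : ℤ} {x : H} (hx : x ∈ W b) : (N ^ j) x ∈ W (b - 2 * j) := by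
  induction j with
  | zero => simpa using hx
  | succ j ih =>
    rw [pow_succ', Module.End.mul_apply, Nat.cast_succ, mul_add_one, ← sub_sub]
    exact hN _ ⟨_, ih, rfl⟩

namespace IsMonodromyWeightFiltration

variable {K H : Type*} [Field K] [AddCommGroup H] [Module K H] {m : ℕ} {N : H →ₗ[K] H}
  {W : ℤ → Submodule K H}

theorem map_pow_sup_eq (hW : IsMonodromyWeightFiltration m N W) (l : ℕ) :
    (W (m + l)).map (N ^ l) ⊔ W (m - l - 1) = W (m - l) := by
  obtain ⟨hmono, -, -, -, hgr⟩ := hW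
  refine le_antisymm (sup_le ?_ (hmono (by omega))) fun y hy => ?_
  · rintro _ ⟨x, hx, rfl⟩
    exact (hgr l).1 x hx
  · obtain ⟨x, hx, hyx⟩ := (hgr l).2.2 y hy
    rw [← add_sub_cancel ((N ^ l) x) y]
    exact Submodule.add_mem_sup ⟨x, hx, rfl⟩ hyx

theorem inf_comap_pow_eq (hW : IsMonodromyWeightFiltration m N W) (l : ℕ) :
    W (m + l) ⊓ (W (m - l - 1)).comap (N ^ l) = W (m + l - 1) := by
  obtain ⟨hmono, -, -, hN, hgr⟩ := hW
  refine le_antisymm (fun x hx => (hgr l).2.1 x hx.1 hx.2) fun x hx => ⟨hmono (by omega) hx, ?_⟩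
  have := pow_apply_mem_of_map_le_s3 hN l hx
  rwa [show (m + l - 1 - 2 * l : ℤ) = m - l - 1 by ring] at this

theorem apply_eq_zero_of_add_lt (hW : IsMonodromyWeightFiltration m N W)
    {S : LinearMap.BilinForm K H} (hNS : ∀ u v : H, S (N u) v + S u (N v) = 0) {a b : ℤ}
    (hab : a + b < 2 * m) {v w : H} (hv : v ∈ W a) (hw : w ∈ W b) : S v w = 0 := by
  obtain ⟨-, hbot, -, hN, hgr⟩ := hW
  obtain ⟨k, hk⟩ : ∃ k : ℕ, min a b < k := ⟨(min a b + 1).toNat, by omega⟩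
  induction k generalizing S a b v w with
  | zero =>
    rcases (show a < 0 ∨ b < 0 by omega) with h | h
    · simp [(Submodule.mem_bot K).1 (hbot a h ▸ hv)]
    · simp [(Submodule.mem_bot K).1 (hbot b h ▸ hw)]
  | succ k ih =>
    wlog hle : a ≤ b generalizing S a b v w
    · have hNS' : ∀ u v : H, S.flip (N u) v + S.flip u (N v) = 0 := fun u v => by
        simpa [add_comm] using hNS v u
      simpa using this hNS' (by omega) hw hv (by omega) (by omega)
    obtain ⟨l, rfl⟩ : ∃ l : ℕ, a = m - l := ⟨(m - a).toNat, by omega⟩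
    obtain ⟨x, hx, hxv⟩ := (hgr l).2.2 v hv
    have hxw : S ((N ^ l) x) w = 0 := by
      rw [LinearMap.BilinForm.apply_pow_eq_neg_one_pow_mul hNS,
        ih hNS (by omega) hx (pow_apply_mem_of_map_le_s3 hN l hw) (by omega), mul_zero]
    have hvxw : S (v - (N ^ l) x) w = 0 := ih hNS (by omega) hxv hw (by omega)
    rwa [map_sub, LinearMap.sub_apply, hxw, sub_zero] at hvxw

variable [FiniteDimensional K H]

theorem finrank_add_finrank_eq_of_graded (hW : IsMonodromyWeightFiltration m N W) (l : ℕ) :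
    finrank K (W (m + l)) + finrank K (W (m - l - 1)) =
      finrank K (W (m - l)) + finrank K (W (m + l - 1)) :=
  Submodule.finrank_add_finrank_eq_of_map_sup_eq (hW.map_pow_sup_eq l) (hW.inf_comap_pow_eq l)

theorem finrank_add_finrank_eq (hW : IsMonodromyWeightFiltration m N W) (l : ℤ) :
    finrank K (W l) + finrank K (W (2 * m - l - 1)) = finrank K H := by
  set d : ℤ → ℕ := fun i => finrank K (W i) with hd
  change d l + d (2 * m - l - 1) = finrank K H
  have hstep (j : ℕ) :
      d (m + (j + 1 : ℕ)) + d (m - (j + 1 : ℕ) - 1) = d (m + j) + d (m - j - 1) := by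
    have := hW.finrank_add_finrank_eq_of_graded (j + 1)
    change d _ + d _ = d _ + d _ at this
    have h₁ : d (m - (j + 1 : ℕ)) = d (m - j - 1) := congrArg d (by push_cast; ring)
    have h₂ : d (m + (j + 1 : ℕ) - 1) = d (m + j) := congrArg d (by push_cast; ring)
    omega
  have hconst (j : ℕ) : d (m + j) + d (m - j - 1) = finrank K H := by
    have hshift (k : ℕ) :
        d (m + j) + d (m - j - 1) = d (m + (j + k : ℕ)) + d (m - (j + k : ℕ) - 1) := by
      induction k with
      | zero => rfl
      | succ k ih => exact ih.trans (hstep (j + k)).symm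
    have htop : d (m + (j + m : ℕ)) = finrank K H := by
      change finrank K (W _) = _
      rw [hW.2.2.1 _ (by omega), finrank_top]
    have hbot : d (m - (j + m : ℕ) - 1) = 0 := by
      change finrank K (W _) = _
      rw [hW.2.1 _ (by omega), finrank_bot]
    rw [hshift m, htop, hbot, add_zero]
  rcases le_or_gt (m : ℤ) l with h | h
  · obtain ⟨j, rfl⟩ : ∃ j : ℕ, l = m + j := ⟨(l - m).toNat, by omega⟩
    rw [show (2 * m - (m + j) - 1 : ℤ) = m - j - 1 by ring]
    exact hconst j
  · obtain ⟨j, rfl⟩ : ∃ j : ℕ, l = m - j - 1 := ⟨(m - l - 1).toNat, by omega⟩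
    rw [add_comm, show (2 * m - (m - j - 1) - 1 : ℤ) = m + j by ring]
    exact hconst j

end IsMonodromyWeightFiltration

theorem stmt_3_general {K H : Type*} [Field K] [AddCommGroup H] [Module K H]
    [FiniteDimensional K H] (m : ℕ) (N : H →ₗ[K] H)
    (W : ℤ → Submodule K H) (hW : IsMonodromyWeightFiltration m N W)
    (S : LinearMap.BilinForm K H) (hSnd : S.Nondegenerate)
    (hNS : ∀ u v : H, S (N u) v + S u (N v) = 0) :
    ∀ l : ℤ, ∀ v : H, (∀ w ∈ W l, S v w = 0) ↔ v ∈ W (2 * (m : ℤ) - l - 1) := by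
  intro l v
  have hperp : W (2 * m - l - 1) = S.flip.orthogonal (W l) := by
    refine Submodule.eq_of_le_of_finrank_le (fun u hu => ?_) ?_
    · rw [LinearMap.BilinForm.mem_orthogonal_iff]
      exact fun w hw => hW.apply_eq_zero_of_add_lt hNS (by omega) hu hw
    · rw [LinearMap.BilinForm.finrank_orthogonal hSnd.flip, ← hW.finrank_add_finrank_eq l]
      omega
  rw [hperp, LinearMap.BilinForm.mem_orthogonal_iff]
  rfl

/-- If `N` is an infinitesimal isometry of a nondegenerate bilinear form `S`
(`S(Nu,v) + S(u,Nv) = 0`), then the annihilator of `W_l` with respect to `S`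
equals `W_{2m-l-1}`, for all `l`. -/
theorem stmt_3 {K H : Type*} [Field K] [CharZero K] [AddCommGroup H] [Module K H]
    [FiniteDimensional K H] (m : ℕ) (N : H →ₗ[K] H) (hN : N ^ (m + 1) = 0)
    (W : ℤ → Submodule K H) (hW : IsMonodromyWeightFiltration m N W)
    (S : LinearMap.BilinForm K H) (hSnd : S.Nondegenerate)
    (hNS : ∀ u v : H, S (N u) v + S u (N v) = 0) :
    ∀ l : ℤ, ∀ v : H, (∀ w ∈ W l, S v w = 0) ↔ v ∈ W (2 * (m : ℤ) - l - 1) :=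
  stmt_3_general m N W hW S hSnd hNS
end
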